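/- Let 0 < β₁ < β₂, ν > 0, μ ∈ ℂ, k ∈ ℕ. Then (J^{β₂-β₁} - μ J^{β₂})^k applied to t ↦ (t^{kβ₁+ν-1}/k!) E_{β₁,ν}^{(k)}(μ t^{β₁}) equals J^{kβ₂} applied to t ↦ t^{ν-1} E_{β₁,ν}(μ t^{β₁}). -/

import Mathlib

/-!
Put `G_{k,ν}(x) = ∑ₘ C(m,k) μ^(m-k) x^(βm+ν-1) / Γ(βm+ν)`, which equals
`x^(kβ+ν-1) E⁽ᵏ⁾_{β,ν}(μ x^β) / k!` for `x > 0`. Integrating termwise with the Beta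
integral gives `J^γ G_{k,ν} = G_{k,ν+γ}`, and Pascal's rule gives
`G_{k+1,ν} - μ G_{k+1,ν+β} = G_{k,ν+β}`. Hence `J^{β₂-β₁} - μ J^{β₂}` maps `G_{k+1,ν}` to
`G_{k,ν+β₂}`, so its `k`-th power maps `G_{k,ν}` to `G_{0,ν+kβ₂} = J^{kβ₂} G_{0,ν}`. All series
converge absolutely by the ratio test, since log-convexity of `Γ` gives
`Γ(x + β) ≥ Γ(x) (x - 1)^β`.
-/

open MeasureTheory Filter Set

/-- Two-parameter Mittag-Leffler function `E_{β,ν}(z) = Σ zⁿ/Γ(βn+ν)`. -/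
noncomputable def ML (β ν : ℝ) (z : ℂ) : ℂ :=
  ∑' n : ℕ, z ^ n / Complex.Gamma ((β * n + ν : ℝ) : ℂ)

/-- Riemann-Liouville fractional integral of order `γ`. -/
noncomputable def frInt (γ : ℝ) (f : ℝ → ℂ) (t : ℝ) : ℂ :=
  (Real.Gamma γ : ℂ)⁻¹ * ∫ τ in (0:ℝ)..t, (((t - τ) ^ (γ - 1) : ℝ) : ℂ) * f τ

/-- Fractional integral with the convention `J⁰ = I`. -/
noncomputable def frInt' (γ : ℝ) (f : ℝ → ℂ) : ℝ → ℂ :=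
  if γ = 0 then f else frInt γ f

/-- Laplace transform. -/
noncomputable def laplace (f : ℝ → ℂ) (s : ℝ) : ℂ :=
  ∫ t in Set.Ioi (0:ℝ), Complex.exp (-(s * t)) * f t

theorem Real.Gamma_mul_rpow_le_Gamma_add {x b : ℝ} (hb : 0 < b) (hx : 1 < x) :
    Real.Gamma x * (x - 1) ^ b ≤ Real.Gamma (x + b) := by
  have hx1 : 0 < x - 1 := by linarith
  have hlog :
      Real.log (Real.Gamma x) = Real.log (x - 1) + Real.log (Real.Gamma (x - 1)) := by
    rw [← Real.log_mul hx1.ne' (Real.Gamma_pos_of_pos hx1).ne', ← Real.Gamma_add_one hx1.ne',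
      sub_add_cancel]
  -- log-convexity: the slope `log (x - 1)` of `log ∘ Γ` on `[x - 1, x]` is at most
  -- its slope on `[x, x + b]`
  have hslope := Real.convexOn_log_Gamma.slope_mono_adjacent (x := x - 1) (y := x)
    (z := x + b) hx1 (by simp only [mem_Ioi]; linarith) (by linarith) (by linarith)
  simp only [Function.comp_apply, hlog, sub_sub_cancel, add_sub_cancel_left, div_one,
    add_sub_cancel_right] at hslope
  rw [le_div_iff₀ hb] at hslope
  rw [← Real.exp_log (Real.Gamma_pos_of_pos (by linarith : 0 < x)),
    ← Real.exp_log (Real.rpow_pos_of_pos hx1 b),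
    ← Real.exp_log (Real.Gamma_pos_of_pos (by linarith : 0 < x + b)), ← Real.exp_add,
    Real.exp_le_exp, Real.log_rpow hx1, hlog]
  linarith

theorem summable_pow_div_Gamma {β : ℝ} (hβ : 0 < β) (ν r : ℝ) :
    Summable fun m : ℕ => r ^ m / Real.Gamma (β * m + ν) := by
  have hlin : Tendsto (fun m : ℕ => β * m + ν) atTop atTop :=
    tendsto_atTop_add_const_right _ ν (tendsto_natCast_atTop_atTop.const_mul_atTop hβ)
  have hgrowth : Tendsto (fun m : ℕ => (β * m + ν - 1) ^ β) atTop atTop :=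
    (tendsto_rpow_atTop hβ).comp (tendsto_atTop_add_const_right _ (-1) hlin)
  refine summable_of_ratio_norm_eventually_le (r := 1 / 2) (by norm_num) ?_
  filter_upwards [hgrowth.eventually_ge_atTop (2 * |r|), hlin.eventually_gt_atTop 1]
    with m hm h1
  set p := (β * m + ν - 1) ^ β
  have hΓ : 0 < Real.Gamma (β * m + ν) := Real.Gamma_pos_of_pos (by linarith)
  have hp : 0 < p := Real.rpow_pos_of_pos (by linarith) β
  have hΓ' : Real.Gamma (β * m + ν) * p ≤ Real.Gamma (β * ↑(m + 1) + ν) := by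
    rw [Nat.cast_succ, show β * (m + 1 : ℝ) + ν = β * m + ν + β by ring]
    exact Real.Gamma_mul_rpow_le_Gamma_add hβ h1
  rw [norm_div, norm_div, Real.norm_of_nonneg hΓ.le,
    Real.norm_of_nonneg ((by positivity : (0 : ℝ) ≤ Real.Gamma (β * m + ν) * p).trans hΓ'),
    norm_pow, norm_pow, Real.norm_eq_abs]
  calc |r| ^ (m + 1) / Real.Gamma (β * ↑(m + 1) + ν)
      ≤ |r| ^ m * |r| / (Real.Gamma (β * m + ν) * p) := by
        rw [pow_succ]; gcongr
    _ ≤ |r| ^ m * (p / 2) / (Real.Gamma (β * m + ν) * p) := by gcongr; linarith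
    _ = 1 / 2 * (|r| ^ m / Real.Gamma (β * m + ν)) := by field_simp

theorem summable_pow_mul_pow_div_Gamma {β : ℝ} (hβ : 0 < β) (ν r : ℝ) (j : ℕ) :
    Summable fun m : ℕ => (m : ℝ) ^ j * r ^ m / Real.Gamma (β * m + ν) := by
  -- `m ^ j ≤ j! * e ^ m` reduces this to `summable_pow_div_Gamma` at the ratio `e * r`
  refine Summable.of_norm_bounded
    ((summable_pow_div_Gamma hβ ν (Real.exp 1 * r)).abs.mul_left (j.factorial : ℝ)) fun m => ?_
  have hm : (m : ℝ) ^ j ≤ j.factorial * Real.exp 1 ^ m := by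
    rw [← Real.exp_nat_mul, mul_one, ← div_le_iff₀' (by positivity)]
    exact Real.pow_div_factorial_le_exp _ m.cast_nonneg j
  simp only [Real.norm_eq_abs, abs_div, abs_mul, mul_pow, abs_pow, Nat.abs_cast,
    abs_of_pos (Real.exp_pos 1)]
  rw [← mul_div_assoc, ← mul_assoc]
  gcongr

noncomputable def mlDerivTerm (β ν : ℝ) (k m : ℕ) (z : ℂ) : ℂ :=
  (m.descFactorial k : ℂ) * z ^ (m - k) / (Real.Gamma (β * m + ν) : ℂ)

theorem norm_mlDerivTerm_le {β ν R : ℝ} {k m : ℕ} {z : ℂ} (hR : 1 ≤ R) (hz : ‖z‖ ≤ R) :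
    ‖mlDerivTerm β ν k m z‖ ≤ (m : ℝ) ^ k * R ^ m / |Real.Gamma (β * m + ν)| := by
  rw [mlDerivTerm, norm_div, norm_mul, norm_pow, Complex.norm_natCast, Complex.norm_real,
    Real.norm_eq_abs]
  gcongr
  · exact_mod_cast Nat.descFactorial_le_pow m k
  · exact (pow_le_pow_left₀ (norm_nonneg z) hz _).trans (pow_le_pow_right₀ hR (m.sub_le k))

theorem summable_norm_mlDerivTerm {β : ℝ} (hβ : 0 < β) (ν : ℝ) (k : ℕ) (z : ℂ) :
    Summable fun m => ‖mlDerivTerm β ν k m z‖ :=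
  (summable_pow_mul_pow_div_Gamma hβ ν (max 1 ‖z‖) k).abs.of_nonneg_of_le
    (fun _ => norm_nonneg _) fun m =>
      (norm_mlDerivTerm_le (le_max_left _ _) (le_max_right _ _)).trans_eq <| by
        rw [abs_div, abs_mul, abs_of_nonneg (by positivity : (0 : ℝ) ≤ (m : ℝ) ^ k),
          abs_of_nonneg (by positivity : (0 : ℝ) ≤ max 1 ‖z‖ ^ m)]

theorem hasDerivAt_mlDerivTerm (β ν : ℝ) (k m : ℕ) (z : ℂ) :
    HasDerivAt (mlDerivTerm β ν k m) (mlDerivTerm β ν (k + 1) m z) z := by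
  have h := ((hasDerivAt_pow (m - k) z).const_mul (m.descFactorial k : ℂ)).div_const
    (Real.Gamma (β * m + ν) : ℂ)
  refine h.congr_deriv ?_
  rw [mlDerivTerm, Nat.descFactorial_succ, Nat.sub_sub]
  push_cast
  ring

theorem hasDerivAt_tsum_mlDerivTerm {β : ℝ} (hβ : 0 < β) (ν : ℝ) (k : ℕ) (z : ℂ) :
    HasDerivAt (fun w => ∑' m, mlDerivTerm β ν k m w)
      (∑' m, mlDerivTerm β ν (k + 1) m z) z := by
  have hR : 1 ≤ ‖z‖ + 1 := by linarith [norm_nonneg z]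
  refine hasDerivAt_tsum_of_isPreconnected
    ((summable_pow_mul_pow_div_Gamma hβ ν (‖z‖ + 1) (k + 1)).abs) Metric.isOpen_ball
    (convex_ball 0 (‖z‖ + 1)).isPreconnected (fun m y _ => hasDerivAt_mlDerivTerm β ν k m y)
    (fun m y hy => ?_) (Metric.mem_ball_self (by linarith))
    (summable_norm_mlDerivTerm hβ ν k 0).of_norm (by simp)
  rw [mem_ball_zero_iff] at hy
  refine (norm_mlDerivTerm_le hR hy.le).trans_eq ?_
  rw [abs_div, abs_mul, abs_of_nonneg (by positivity : (0 : ℝ) ≤ (m : ℝ) ^ (k + 1)),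
    abs_of_nonneg (by positivity : (0 : ℝ) ≤ (‖z‖ + 1) ^ m)]

theorem iteratedDeriv_ML {β : ℝ} (hβ : 0 < β) (ν : ℝ) (k : ℕ) :
    iteratedDeriv k (ML β ν) = fun z => ∑' m, mlDerivTerm β ν k m z := by
  induction k with
  | zero =>
    ext z
    simp only [ML, mlDerivTerm, Nat.descFactorial_zero, Nat.cast_one, one_mul, Nat.sub_zero,
      Complex.Gamma_ofReal, iteratedDeriv_zero]
  | succ k ih =>
    ext z
    rw [iteratedDeriv_succ, ih, (hasDerivAt_tsum_mlDerivTerm hβ ν k z).deriv]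

theorem intervalIntegrable_sub_rpow_mul_rpow {a γ t : ℝ} (ha : 0 < a) (hγ : 0 < γ)
    (ht : 0 < t) :
    IntervalIntegrable (fun τ => (t - τ) ^ (γ - 1) * τ ^ (a - 1)) volume 0 t := by
  -- each factor is singular at only one endpoint, so split the interval in the middle
  have hleft :
      IntervalIntegrable (fun τ => (t - τ) ^ (γ - 1) * τ ^ (a - 1)) volume 0 (t / 2) := by
    refine (intervalIntegral.intervalIntegrable_rpow' (r := a - 1)
      (by linarith)).continuousOn_mul fun τ hτ => ?_
    rw [uIcc_of_le (by linarith)] at hτ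
    exact ((continuousAt_const.sub continuousAt_id).rpow_const
      (Or.inl (show (0 : ℝ) < t - τ by linarith [hτ.2]).ne')).continuousWithinAt
  have hright :
      IntervalIntegrable (fun τ => (t - τ) ^ (γ - 1) * τ ^ (a - 1)) volume (t / 2) t := by
    have h : IntervalIntegrable (fun τ => (t - τ) ^ (γ - 1)) volume (t / 2) t := by
      simpa [sub_half] using
        ((intervalIntegral.intervalIntegrable_rpow' (r := γ - 1) (by linarith)).comp_sub_left t
          (a := 0) (b := t / 2)).symm
    refine h.mul_continuousOn fun τ hτ => ?_
    rw [uIcc_of_le (by linarith)] at hτ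
    exact (continuousAt_id.rpow_const
      (Or.inl (show (0 : ℝ) < τ by linarith [hτ.1]).ne')).continuousWithinAt
  exact hleft.trans hright

theorem Complex.betaIntegral_ofReal {a γ : ℝ} (ha : 0 < a) (hγ : 0 < γ) :
    Complex.betaIntegral a γ = (Real.Gamma a * Real.Gamma γ / Real.Gamma (a + γ) : ℝ) := by
  have h := Complex.Gamma_mul_Gamma_eq_betaIntegral (s := a) (t := γ) (by simpa) (by simpa)
  rw [← Complex.ofReal_add, Complex.Gamma_ofReal, Complex.Gamma_ofReal,
    Complex.Gamma_ofReal] at h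
  have hΓ : (Real.Gamma (a + γ) : ℂ) ≠ 0 :=
    Complex.ofReal_ne_zero.mpr (Real.Gamma_pos_of_pos (by linarith)).ne'
  rw [Complex.ofReal_div, Complex.ofReal_mul, h, mul_div_cancel_left₀ _ hΓ]

theorem integral_sub_rpow_mul_rpow {a γ t : ℝ} (ha : 0 < a) (hγ : 0 < γ) (ht : 0 < t) :
    ∫ τ in 0..t, (t - τ) ^ (γ - 1) * τ ^ (a - 1)
      = t ^ (a + γ - 1) * (Real.Gamma a * Real.Gamma γ / Real.Gamma (a + γ)) := by
  have h := Complex.betaIntegral_scaled a γ ht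
  rw [Complex.betaIntegral_ofReal ha hγ] at h
  apply Complex.ofReal_injective
  rw [← intervalIntegral.integral_ofReal, Complex.ofReal_mul, Complex.ofReal_cpow ht.le]
  push_cast at h ⊢
  rw [← h]
  refine intervalIntegral.integral_congr fun τ hτ => ?_
  rw [uIcc_of_le ht.le] at hτ
  rw [Complex.ofReal_cpow (by linarith [hτ.2]), Complex.ofReal_cpow hτ.1]
  push_cast
  ring

theorem frInt_tsum_mul_rpow {γ t : ℝ} (hγ : 0 < γ) (ht : 0 < t) {c : ℕ → ℂ} {a : ℕ → ℝ}
    (ha : ∀ m, 0 < a m)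
    (hs : Summable fun m =>
      ‖c m‖ * (Real.Gamma (a m) / Real.Gamma (a m + γ)) * t ^ (a m + γ - 1)) :
    frInt γ (fun τ => ∑' m, c m * ((τ ^ (a m - 1) : ℝ) : ℂ)) t =
      ∑' m, c m * ((Real.Gamma (a m) / Real.Gamma (a m + γ) : ℝ) : ℂ) *
        ((t ^ (a m + γ - 1) : ℝ) : ℂ) := by
  set K : ℕ → ℝ → ℝ := fun m τ => (t - τ) ^ (γ - 1) * τ ^ (a m - 1)
  have hK_int (m : ℕ) : IntegrableOn (K m) (Ioc 0 t) :=
    (intervalIntegrable_iff_integrableOn_Ioc_of_le ht.le).1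
      (intervalIntegrable_sub_rpow_mul_rpow (ha m) hγ ht)
  have hK_eq (m : ℕ) : ∫ τ in Ioc 0 t, K m τ
      = t ^ (a m + γ - 1) * (Real.Gamma (a m) * Real.Gamma γ / Real.Gamma (a m + γ)) := by
    rw [← intervalIntegral.integral_of_le ht.le]
    exact integral_sub_rpow_mul_rpow (ha m) hγ ht
  have hK_nonneg (m : ℕ) (τ : ℝ) (hτ : τ ∈ Ioc 0 t) : 0 ≤ K m τ :=
    mul_nonneg (Real.rpow_nonneg (by linarith [hτ.2]) _) (Real.rpow_nonneg hτ.1.le _)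
  have hΓ : (Real.Gamma γ : ℂ) ≠ 0 := Complex.ofReal_ne_zero.mpr (Real.Gamma_pos_of_pos hγ).ne'
  have hsum (τ : ℝ) : (((t - τ) ^ (γ - 1) : ℝ) : ℂ) * ∑' m, c m * ((τ ^ (a m - 1) : ℝ) : ℂ)
      = ∑' m, c m * (K m τ : ℂ) := by
    rw [← tsum_mul_left]
    congr 1 with m
    simp only [K, Complex.ofReal_mul]
    ring
  rw [frInt, intervalIntegral.integral_of_le ht.le]
  simp_rw [hsum]
  rw [← integral_tsum_of_summable_integral_norm (F := fun m τ => c m * (K m τ : ℂ))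
    (fun m => (hK_int m).ofReal.const_mul (c m)), ← tsum_mul_left]
  · congr 1 with m
    rw [integral_const_mul, integral_complex_ofReal, hK_eq]
    push_cast
    field_simp
  · refine (hs.mul_left (Real.Gamma γ)).congr fun m => ?_
    rw [setIntegral_congr_fun measurableSet_Ioc fun τ hτ => by
      rw [norm_mul, Complex.norm_real, Real.norm_of_nonneg (hK_nonneg m τ hτ)]]
    rw [integral_const_mul, hK_eq]
    ring

noncomputable def mlKernelCoeff (β ν : ℝ) (μ : ℂ) (k m : ℕ) : ℂ :=
  (m.choose k : ℂ) * μ ^ (m - k) / (Real.Gamma (β * m + ν) : ℂ)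

/-- The series `G_{k,ν}`. Its terms with `m < k` vanish, so the truncated subtraction `m - k`
in `mlKernelCoeff` is harmless. -/
noncomputable def mlKernel (β ν : ℝ) (μ : ℂ) (k : ℕ) (x : ℝ) : ℂ :=
  ∑' m, mlKernelCoeff β ν μ k m * ((x ^ (β * m + ν - 1) : ℝ) : ℂ)

theorem mlKernelCoeff_mul_rpow {β ν x : ℝ} (hx : 0 < x) (μ : ℂ) (k m : ℕ) :
    mlKernelCoeff β ν μ k m * ((x ^ (β * m + ν - 1) : ℝ) : ℂ)
      = ((x ^ (k * β + ν - 1) : ℝ) : ℂ) / k.factorial *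
          mlDerivTerm β ν k m (μ * ((x ^ β : ℝ) : ℂ)) := by
  rcases lt_or_ge m k with hmk | hkm
  · simp [mlKernelCoeff, mlDerivTerm, Nat.choose_eq_zero_of_lt hmk,
      Nat.descFactorial_eq_zero_iff_lt.mpr hmk]
  obtain ⟨n, rfl⟩ := Nat.exists_eq_add_of_le hkm
  have hpow : x ^ (β * ((k + n : ℕ) : ℝ) + ν - 1) = x ^ (k * β + ν - 1) * (x ^ β) ^ n := by
    rw [← Real.rpow_natCast, ← Real.rpow_mul hx.le, ← Real.rpow_add hx]
    push_cast
    ring_nf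
  have hfac : (k.factorial : ℂ) ≠ 0 := Nat.cast_ne_zero.mpr k.factorial_ne_zero
  simp only [mlKernelCoeff, mlDerivTerm, Nat.add_sub_cancel_left,
    Nat.descFactorial_eq_factorial_mul_choose, hpow]
  push_cast
  field_simp
  ring

theorem summable_norm_mlKernel_term {β x : ℝ} (hβ : 0 < β) (hx : 0 < x) (ν : ℝ) (μ : ℂ)
    (k : ℕ) :
    Summable fun m => ‖mlKernelCoeff β ν μ k m * ((x ^ (β * m + ν - 1) : ℝ) : ℂ)‖ := by
  simp_rw [mlKernelCoeff_mul_rpow hx, norm_mul]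
  exact (summable_norm_mlDerivTerm hβ ν k _).mul_left _

theorem mlKernel_eq_iteratedDeriv_ML {β x : ℝ} (hβ : 0 < β) (hx : 0 < x) (ν : ℝ) (μ : ℂ)
    (k : ℕ) : mlKernel β ν μ k x
      = ((x ^ (k * β + ν - 1) : ℝ) : ℂ) / k.factorial *
          iteratedDeriv k (ML β ν) (μ * ((x ^ β : ℝ) : ℂ)) := by
  rw [iteratedDeriv_ML hβ, ← tsum_mul_left]
  exact tsum_congr (mlKernelCoeff_mul_rpow hx μ k)

theorem mlKernelCoeff_mul_Gamma_div {β ν : ℝ} (hβ : 0 ≤ β) (hν : 0 < ν) (γ : ℝ) (μ : ℂ)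
    (k m : ℕ) :
    mlKernelCoeff β ν μ k m *
        ((Real.Gamma (β * m + ν) / Real.Gamma (β * m + ν + γ) : ℝ) : ℂ)
      = mlKernelCoeff β (ν + γ) μ k m := by
  have hΓ : (Real.Gamma (β * m + ν) : ℂ) ≠ 0 :=
    Complex.ofReal_ne_zero.mpr (Real.Gamma_pos_of_pos (by positivity)).ne'
  rw [mlKernelCoeff, mlKernelCoeff, ← add_assoc]
  push_cast
  field_simp

theorem frInt_mlKernel {β ν γ t : ℝ} (hβ : 0 < β) (hν : 0 < ν) (hγ : 0 < γ) (ht : 0 < t)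
    (μ : ℂ) (k : ℕ) : frInt γ (mlKernel β ν μ k) t = mlKernel β (ν + γ) μ k t := by
  have hΓ (m : ℕ) : 0 ≤ Real.Gamma (β * m + ν) / Real.Gamma (β * m + ν + γ) :=
    div_nonneg (Real.Gamma_pos_of_pos (by positivity)).le
      (Real.Gamma_pos_of_pos (by positivity)).le
  refine (frInt_tsum_mul_rpow hγ ht (c := mlKernelCoeff β ν μ k) (a := fun m => β * m + ν)
    (fun m => by positivity) ?_).trans (tsum_congr fun m => ?_)
  · refine (summable_norm_mlKernel_term hβ ht (ν + γ) μ k).congr fun m => ?_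
    rw [← mlKernelCoeff_mul_Gamma_div hβ.le hν γ, norm_mul, norm_mul, Complex.norm_real,
      Complex.norm_real, Real.norm_of_nonneg (hΓ m),
      Real.norm_of_nonneg (Real.rpow_nonneg ht.le _), ← add_assoc]
  · rw [mlKernelCoeff_mul_Gamma_div hβ.le hν γ, ← add_assoc]

theorem mlKernelCoeff_succ_sub (β ν : ℝ) (μ : ℂ) (k m : ℕ) :
    mlKernelCoeff β ν μ (k + 1) (m + 1) - μ * mlKernelCoeff β (ν + β) μ (k + 1) m
      = mlKernelCoeff β (ν + β) μ k m := by
  have harg : β * ((m + 1 : ℕ) : ℝ) + ν = β * m + (ν + β) := by push_cast; ring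
  rw [mlKernelCoeff, mlKernelCoeff, mlKernelCoeff, harg, Nat.choose_succ_succ',
    Nat.add_sub_add_right]
  rcases lt_or_ge m (k + 1) with hmk | hkm
  · rw [Nat.choose_eq_zero_of_lt hmk]
    push_cast
    ring
  · obtain ⟨n, rfl⟩ := Nat.exists_eq_add_of_le hkm
    rw [show k + 1 + n - k = n + 1 by omega, Nat.add_sub_cancel_left, pow_succ]
    push_cast
    ring

theorem mlKernel_succ_sub {β x : ℝ} (hβ : 0 < β) (hx : 0 < x) (ν : ℝ) (μ : ℂ) (k : ℕ) :
    mlKernel β ν μ (k + 1) x - μ * mlKernel β (ν + β) μ (k + 1) x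
      = mlKernel β (ν + β) μ k x := by
  have hzero : mlKernelCoeff β ν μ (k + 1) 0 = 0 := by simp [mlKernelCoeff]
  have hs := summable_norm_mlKernel_term hβ hx ν μ (k + 1)
  have hs' := summable_norm_mlKernel_term hβ hx (ν + β) μ (k + 1)
  rw [mlKernel, hs.of_norm.tsum_eq_zero_add, hzero, zero_mul, zero_add, mlKernel, mlKernel,
    ← tsum_mul_left,
    ← ((summable_nat_add_iff 1).mpr hs.of_norm).tsum_sub (hs'.of_norm.mul_left μ)]
  refine tsum_congr fun m => ?_
  rw [← mlKernelCoeff_succ_sub β ν μ k m,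
    show β * ((m + 1 : ℕ) : ℝ) + ν - 1 = β * m + (ν + β) - 1 by push_cast; ring]
  ring

noncomputable def frIntSubMul (a b : ℝ) (μ : ℂ) (g : ℝ → ℂ) : ℝ → ℂ :=
  fun x => frInt a g x - μ * frInt b g x

theorem frInt_congr {γ t : ℝ} (ht : 0 ≤ t) {f g : ℝ → ℂ} (h : EqOn f g (Ioi 0)) :
    frInt γ f t = frInt γ g t := by
  rw [frInt, frInt, intervalIntegral.integral_of_le ht, intervalIntegral.integral_of_le ht,
    setIntegral_congr_fun measurableSet_Ioc fun τ hτ => by rw [h hτ.1]]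

theorem frInt'_congr {γ t : ℝ} (ht : 0 < t) {f g : ℝ → ℂ} (h : EqOn f g (Ioi 0)) :
    frInt' γ f t = frInt' γ g t := by
  unfold frInt'
  split_ifs
  exacts [h ht, frInt_congr ht.le h]

theorem frIntSubMul_congr {a b : ℝ} {μ : ℂ} {f g : ℝ → ℂ} (h : EqOn f g (Ioi 0)) :
    EqOn (frIntSubMul a b μ f) (frIntSubMul a b μ g) (Ioi 0) := fun x hx => by
  rw [frIntSubMul, frIntSubMul, frInt_congr (le_of_lt hx) h, frInt_congr (le_of_lt hx) h]

theorem iterate_frIntSubMul_congr {a b : ℝ} {μ : ℂ} {f g : ℝ → ℂ} (n : ℕ)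
    (h : EqOn f g (Ioi 0)) :
    EqOn ((frIntSubMul a b μ)^[n] f) ((frIntSubMul a b μ)^[n] g) (Ioi 0) := by
  induction n with
  | zero => exact h
  | succ n ih =>
    rw [Function.iterate_succ']
    exact frIntSubMul_congr ih

theorem frIntSubMul_mlKernel_succ {β₁ β₂ ν : ℝ} (hβ₁ : 0 < β₁) (hβ : β₁ < β₂) (hν : 0 < ν)
    (μ : ℂ) (k : ℕ) :
    EqOn (frIntSubMul (β₂ - β₁) β₂ μ (mlKernel β₁ ν μ (k + 1))) (mlKernel β₁ (ν + β₂) μ k)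
      (Ioi 0) := fun x hx => by
  have h := mlKernel_succ_sub hβ₁ hx (ν + (β₂ - β₁)) μ k
  rw [show ν + (β₂ - β₁) + β₁ = ν + β₂ by ring] at h
  rwa [frIntSubMul, frInt_mlKernel hβ₁ hν (sub_pos.2 hβ) hx,
    frInt_mlKernel hβ₁ hν (hβ₁.trans hβ) hx]

theorem iterate_frIntSubMul_mlKernel {β₁ β₂ : ℝ} (hβ₁ : 0 < β₁) (hβ : β₁ < β₂) (μ : ℂ)
    (k : ℕ) {ν : ℝ} (hν : 0 < ν) :
    EqOn ((frIntSubMul (β₂ - β₁) β₂ μ)^[k] (mlKernel β₁ ν μ k))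
      (mlKernel β₁ (ν + k * β₂) μ 0) (Ioi 0) := by
  induction k generalizing ν with
  | zero => simp [EqOn]
  | succ k ih =>
    rw [Function.iterate_succ]
    refine (iterate_frIntSubMul_congr k (frIntSubMul_mlKernel_succ hβ₁ hβ hν μ k)).trans ?_
    convert ih (by linarith [hβ₁.trans hβ] : 0 < ν + β₂) using 2
    push_cast
    ring

theorem frInt'_mlKernel {β ν γ t : ℝ} (hβ : 0 < β) (hν : 0 < ν) (hγ : 0 ≤ γ) (ht : 0 < t)
    (μ : ℂ) (k : ℕ) : frInt' γ (mlKernel β ν μ k) t = mlKernel β (ν + γ) μ k t := by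
  rcases hγ.eq_or_lt with rfl | hγ
  · simp [frInt']
  · rw [frInt', if_neg hγ.ne', frInt_mlKernel hβ hν hγ ht]

theorem lemma_1b (β₁ β₂ ν : ℝ) (hβ1 : 0 < β₁) (hβ12 : β₁ < β₂) (hν : 0 < ν)
    (μ : ℂ) (k : ℕ) (t : ℝ) (ht : 0 < t) :
    ((fun g : ℝ → ℂ => fun x => frInt (β₂ - β₁) g x - μ * frInt β₂ g x)^[k]
        (fun x : ℝ =>
          (((x ^ ((k : ℝ) * β₁ + ν - 1) : ℝ) : ℂ) / (k.factorial : ℂ)) *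
            iteratedDeriv k (ML β₁ ν) (μ * ((x ^ β₁ : ℝ) : ℂ)))) t
      = frInt' ((k : ℝ) * β₂)
          (fun x : ℝ => ((x ^ (ν - 1) : ℝ) : ℂ) * ML β₁ ν (μ * ((x ^ β₁ : ℝ) : ℂ))) t := by
  have hstart : EqOn
      (fun x : ℝ => (((x ^ ((k : ℝ) * β₁ + ν - 1) : ℝ) : ℂ) / (k.factorial : ℂ)) *
        iteratedDeriv k (ML β₁ ν) (μ * ((x ^ β₁ : ℝ) : ℂ)))
      (mlKernel β₁ ν μ k) (Ioi 0) :=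
    fun x hx => (mlKernel_eq_iteratedDeriv_ML hβ1 hx ν μ k).symm
  have hbase : EqOn (mlKernel β₁ ν μ 0)
      (fun x : ℝ => ((x ^ (ν - 1) : ℝ) : ℂ) * ML β₁ ν (μ * ((x ^ β₁ : ℝ) : ℂ))) (Ioi 0) :=
    fun x hx => by simp [mlKernel_eq_iteratedDeriv_ML hβ1 hx]
  calc _ = (frIntSubMul (β₂ - β₁) β₂ μ)^[k] (mlKernel β₁ ν μ k) t :=
        iterate_frIntSubMul_congr k hstart ht
    _ = mlKernel β₁ (ν + k * β₂) μ 0 t := iterate_frIntSubMul_mlKernel hβ1 hβ12 μ k hν ht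
    _ = frInt' (k * β₂) (mlKernel β₁ ν μ 0) t :=
        (frInt'_mlKernel hβ1 hν (mul_nonneg k.cast_nonneg (hβ1.trans hβ12).le) ht μ 0).symm
    _ = _ := frInt'_congr ht hbase
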